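/- Inserting a new point p into a finite set S moves each existing point by at most one layer: if q is in layer i of S, then q lies in layer i or layer i+1 of S ∪ {p}. -/

import Mathlib

/-!
A point lies in layer `k + 1` exactly when the longest dominance chain starting at it has
`k + 1` points. Inserting `p` cannot shorten any chain, and it lengthens a longest chain by
at most one point, because dominance is a strict order and so `p` occurs at most once on a
chain: dropping it leaves a chain of `S` (when `p` is followed by `r`, the point `r`
dominates the predecessor of `p` by transitivity).
-/

open scoped Classical

/-- `p` dominates `q`. -/
def dom (p q : ℝ × ℝ) : Prop :=
  (p.1 ≤ q.1 ∧ p.2 < q.2) ∨ (p.1 < q.1 ∧ p.2 ≤ q.2)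

/-- Dominance score of `p` in `S`. -/
noncomputable def score (S : Finset (ℝ × ℝ)) (p : ℝ × ℝ) : ℕ :=
  (S.filter (fun q => dom p q)).card

/-- Maxima of `S`: points dominated by no point of `S`. -/
noncomputable def maxima (S : Finset (ℝ × ℝ)) : Finset (ℝ × ℝ) :=
  S.filter (fun p => ∀ q ∈ S, ¬ dom q p)

/-- Points remaining after removing the first `i` layers of maxima. -/
noncomputable def rest (S : Finset (ℝ × ℝ)) : ℕ → Finset (ℝ × ℝ)
  | 0 => S
  | i + 1 => rest S i \ maxima (rest S i)

/-- The `i`-th layer of maxima (layers indexed from 1). -/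
noncomputable def layer (S : Finset (ℝ × ℝ)) (i : ℕ) : Finset (ℝ × ℝ) :=
  maxima (rest S (i - 1))

/-- There is a dominance chain of length `j` in `S` starting at `p`
(each next element dominates the previous). -/
def IsChainFrom (S : Finset (ℝ × ℝ)) (p : ℝ × ℝ) (j : ℕ) : Prop :=
  ∃ f : ℕ → ℝ × ℝ, f 0 = p ∧ (∀ t, t < j → f t ∈ S) ∧
    ∀ t, t + 1 < j → dom (f (t + 1)) (f t)

lemma dom_irrefl (q : ℝ × ℝ) : ¬ dom q q := by
  rintro (⟨-, h⟩ | ⟨h, -⟩) <;> exact lt_irrefl _ h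

lemma dom_trans {a b c : ℝ × ℝ} (hab : dom a b) (hbc : dom b c) : dom a c := by
  rcases hab with ⟨h1, h2⟩ | ⟨h1, h2⟩ <;> rcases hbc with ⟨h3, h4⟩ | ⟨h3, h4⟩
  · exact Or.inl ⟨h1.trans h3, h2.trans h4⟩
  · exact Or.inl ⟨h1.trans h3.le, h2.trans_le h4⟩
  · exact Or.inr ⟨h1.trans_le h3, h2.trans h4.le⟩
  · exact Or.inr ⟨h1.trans h3, h2.trans h4⟩

namespace IsChainFrom

variable {S T : Finset (ℝ × ℝ)} {q r : ℝ × ℝ} {n : ℕ}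

lemma zero (S : Finset (ℝ × ℝ)) (q : ℝ × ℝ) : IsChainFrom S q 0 :=
  ⟨fun _ => q, rfl, fun _ _ => by omega, fun _ _ => by omega⟩

lemma mono_length {m : ℕ} (h : IsChainFrom S q n) (hmn : m ≤ n) : IsChainFrom S q m := by
  obtain ⟨f, hf0, hfS, hf⟩ := h
  exact ⟨f, hf0, fun t ht => hfS t (by omega), fun t ht => hf t (by omega)⟩

lemma mono (h : IsChainFrom S q n) (hST : S ⊆ T) : IsChainFrom T q n := by
  obtain ⟨f, hf0, hfS, hf⟩ := h
  exact ⟨f, hf0, fun t ht => hST (hfS t ht), hf⟩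

lemma mem (h : IsChainFrom S q (n + 1)) : q ∈ S := by
  obtain ⟨f, rfl, hfS, -⟩ := h
  exact hfS 0 n.succ_pos

lemma cons (hq : q ∈ S) (hrq : dom r q) (h : IsChainFrom S r n) : IsChainFrom S q (n + 1) := by
  obtain ⟨f, rfl, hfS, hf⟩ := h
  refine ⟨fun t => if t = 0 then q else f (t - 1), rfl, fun t ht => ?_, fun t ht => ?_⟩
  · rcases t with _ | t
    · exact hq
    · exact hfS t (by omega)
  · rcases t with _ | t
    · exact hrq
    · exact hf t (by omega)

lemma exists_dom (h : IsChainFrom S q (n + 2)) : ∃ r, dom r q ∧ IsChainFrom S r (n + 1) := by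
  obtain ⟨f, rfl, hfS, hf⟩ := h
  exact ⟨f 1, hf 0 (by omega), fun t => f (t + 1), rfl,
    fun t ht => hfS (t + 1) (by omega), fun t ht => hf (t + 1) (by omega)⟩

lemma one_iff : IsChainFrom S q 1 ↔ q ∈ S :=
  ⟨mem, fun hq => ⟨fun _ => q, rfl, fun _ _ => hq, fun _ _ => by omega⟩⟩

lemma succ_succ_iff :
    IsChainFrom S q (n + 2) ↔ IsChainFrom S q (n + 1) ∧ ∃ r, IsChainFrom S r (n + 1) ∧ dom r q :=
  ⟨fun h => ⟨h.mono_length (by omega), (h.exists_dom).imp fun _ hr => hr.symm⟩,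
    fun ⟨hq, r, hr, hrq⟩ => cons hq.mem hrq hr⟩

/-- A chain starting above `p` never meets `p`. -/
lemma of_insert_of_dom {p : ℝ × ℝ} (hrp : dom r p) (h : IsChainFrom (insert p S) r n) :
    IsChainFrom S r n := by
  induction n generalizing r with
  | zero => exact zero S r
  | succ n ih =>
    have hr : r ∈ S := (Finset.mem_insert.mp h.mem).resolve_left
      fun hrp' => dom_irrefl p (hrp' ▸ hrp)
    rcases n with _ | n
    · exact one_iff.mpr hr
    · obtain ⟨r', hr'r, hr'⟩ := h.exists_dom
      exact cons hr hr'r (ih (dom_trans hr'r hrp) hr')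

lemma of_insert {p : ℝ × ℝ} (hq : q ∈ S) (h : IsChainFrom (insert p S) q (n + 1)) :
    IsChainFrom S q n := by
  induction n generalizing q with
  | zero => exact zero S q
  | succ n ih =>
    obtain ⟨r, hrq, hr⟩ := h.exists_dom
    rcases Finset.mem_insert.mp hr.mem with rfl | hrS
    · rcases n with _ | n
      · exact one_iff.mpr hq
      · obtain ⟨r', hr'r, hr'⟩ := hr.exists_dom
        exact cons hq (dom_trans hr'r hrq) (of_insert_of_dom hr'r hr')
    · exact cons hq hrq (ih hrS hr)

end IsChainFrom

lemma mem_rest_iff {S : Finset (ℝ × ℝ)} {q : ℝ × ℝ} {k : ℕ} :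
    q ∈ rest S k ↔ IsChainFrom S q (k + 1) := by
  induction k generalizing q with
  | zero => exact IsChainFrom.one_iff.symm
  | succ k ih =>
    simp only [rest, maxima, Finset.mem_sdiff, Finset.mem_filter, not_and, not_forall,
      not_not, exists_prop, ih, IsChainFrom.succ_succ_iff]
    exact and_congr_right fun hq => ⟨fun h => h hq, fun h _ => h⟩

lemma layer_succ (S : Finset (ℝ × ℝ)) (k : ℕ) : layer S (k + 1) = rest S k \ rest S (k + 1) :=
  (Finset.sdiff_sdiff_eq_self (Finset.filter_subset _ _)).symm

lemma mem_layer_succ_iff {S : Finset (ℝ × ℝ)} {q : ℝ × ℝ} {k : ℕ} :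
    q ∈ layer S (k + 1) ↔ IsChainFrom S q (k + 1) ∧ ¬ IsChainFrom S q (k + 2) := by
  rw [layer_succ, Finset.mem_sdiff, mem_rest_iff, mem_rest_iff]

theorem insert_moves_at_most_one_layer_general (S : Finset (ℝ × ℝ)) (p : ℝ × ℝ)
    (i : ℕ) (hi : 1 ≤ i) (q : ℝ × ℝ) (hq : q ∈ layer S i) :
    q ∈ layer (insert p S) i ∨ q ∈ layer (insert p S) (i + 1) := by
  obtain ⟨k, rfl⟩ : ∃ k, i = k + 1 := ⟨i - 1, by omega⟩
  obtain ⟨hchain, hmax⟩ := mem_layer_succ_iff.mp hq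
  have hchain' : IsChainFrom (insert p S) q (k + 1) := hchain.mono (Finset.subset_insert p S)
  have hmax' : ¬ IsChainFrom (insert p S) q (k + 3) := fun h => hmax (h.of_insert hchain.mem)
  by_cases hlonger : IsChainFrom (insert p S) q (k + 2)
  · exact Or.inr (mem_layer_succ_iff.mpr ⟨hlonger, hmax'⟩)
  · exact Or.inl (mem_layer_succ_iff.mpr ⟨hchain', hlonger⟩)

theorem insert_moves_at_most_one_layer (S : Finset (ℝ × ℝ)) (p : ℝ × ℝ)
    (hp : p ∉ S) (i : ℕ) (hi : 1 ≤ i) (q : ℝ × ℝ) (hq : q ∈ layer S i) :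
    q ∈ layer (insert p S) i ∨ q ∈ layer (insert p S) (i + 1) :=
  insert_moves_at_most_one_layer_general S p i hi q hq
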